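/- Theorem 4.1A (Projective Orchard Theorem, well-definedness): Let P be a generic configuration of n points in RP^d with binom(n-2,d) even. For any projective hyperplane H ⊂ RP^d disjoint from P, identifying RP^d \ H with R^d yields an affine generic configuration whose Orchard partition into two classes does not depend on the choice of H. Hence there is a natural partition of P into at most two classes. -/

import Mathlib

open Finset
attribute [local instance] Classical.propDecidable

/-- `d`-dimensional real projective space. -/
abbrev ProjSp (d : ℕ) := Projectivization ℝ (Fin (d + 1) → ℝ)

/-- A finite set of points of `RP^d` is generic if no `k+1 ≤ d+1` of its points lie in a
projective subspace of dimension `< k`, i.e. representatives of any at most `d+1` of the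
points are linearly independent. -/
def GenericProj {d : ℕ} (Q : Finset (ProjSp d)) : Prop :=
  ∀ S : Finset (ProjSp d), S ⊆ Q → S.card ≤ d + 1 →
    LinearIndependent ℝ (fun x : S => Projectivization.rep (x : ProjSp d))

/-- The affine chart associated with a linear form `f`: a point `x` of `RP^d` with
`f` nonvanishing on it is sent to its unique representative in the affine hyperplane
`{v | f v = 1}` (a copy of `ℝ^d`). -/
noncomputable def chart {d : ℕ} (f : (Fin (d + 1) → ℝ) →ₗ[ℝ] ℝ) (x : ProjSp d) :
    Fin (d + 1) → ℝ :=
  (f x.rep)⁻¹ • x.rep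

/-- `H` separates `A` from `B` inside the ambient set `Amb`: both points lie in `Amb \ H`
and in different connected components of `Amb \ H`. -/
def SeparatesIn {d : ℕ} (Amb H : Set (Fin (d + 1) → ℝ)) (A B : Fin (d + 1) → ℝ) : Prop :=
  A ∈ Amb \ H ∧ B ∈ Amb \ H ∧ A ∉ connectedComponentIn (Amb \ H) B

/-- The number of hyperplanes of the affine chart `Amb` spanned by `d` points of
`Q \ {A, B}` which separate `A` from `B` in `Amb`. -/
noncomputable def sepCountIn {d : ℕ} (Amb : Set (Fin (d + 1) → ℝ))
    (Q : Finset (Fin (d + 1) → ℝ)) (A B : Fin (d + 1) → ℝ) : ℕ :=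
  (((Q \ {A, B}).powersetCard d).filter (fun S =>
    SeparatesIn Amb (affineSpan ℝ (S : Set (Fin (d + 1) → ℝ)) :
      Set (Fin (d + 1) → ℝ)) A B)).card

/-- The Orchard relation of the projective configuration `Q` read in the affine chart
given by the linear form `f`. -/
noncomputable def ChartRel {d : ℕ} (f : (Fin (d + 1) → ℝ) →ₗ[ℝ] ℝ)
    (Q : Finset (ProjSp d)) (x y : ProjSp d) : Prop :=
  x = y ∨ sepCountIn {v | f v = 1} (Q.image (chart f)) (chart f x) (chart f y) % 2 =
    Nat.choose (Q.card - 3) (d - 1) % 2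

open Module Submodule

/-!
In the chart `{f = 1}`, the hyperplane spanned by `d` points `S` is `{f = 1, φ_S = 0}` for a
linear form `φ_S` vanishing on `S`, and it separates the images of `x` and `y` iff
`φ_S(x̂) φ_S(ŷ) · f(x̂) f(ŷ) < 0`. Summing over the `binom(n-2, d)` hyperplanes, the Orchard
count mod 2 is a chart-free parity plus `binom(n-2, d)` times the sign bit of `f(x̂) f(ŷ)`, so
the relation does not depend on the chart when `binom(n-2, d)` is even.

The chart-free parity satisfies `p(x,y) + p(y,z) + p(x,z) = binom(n-3, d-1)` mod 2: a hyperplane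
avoiding `x, y, z` contributes `0`, since its three sign products multiply to a square, and for
each `(d-1)`-set `T` the three hyperplanes `T + z`, `T + x`, `T + y` together contribute `1`:
writing `x̂ ≡ b ŷ + c ẑ` modulo `span T`, the product of their three sign products is a negative
square. This identity gives transitivity and at most two classes.
-/

section AffineSpan

variable {k V ι : Type*} [Field k] [AddCommGroup V] [Module k V] [Fintype ι]

theorem coe_affineSpan_range_eq_span_inter (f : V →ₗ[k] k) {p : ι → V} (hp : ∀ i, f (p i) = 1) :
    (affineSpan k (Set.range p) : Set V) = (span k (Set.range p) : Set V) ∩ {v | f v = 1} := by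
  ext v
  constructor
  · intro hv
    obtain ⟨w, hw, rfl⟩ := eq_affineCombination_of_mem_affineSpan_of_fintype hv
    rw [affineCombination_eq_linear_combination _ _ _ hw]
    refine ⟨sum_mem fun i _ => smul_mem _ _ (subset_span ⟨i, rfl⟩), ?_⟩
    simpa [map_sum, hp] using hw
  · rintro ⟨hv, hfv⟩
    obtain ⟨w, rfl⟩ := (mem_span_range_iff_exists_fun k).1 hv
    have hw : ∑ i, w i = 1 := by simpa [map_sum, hp] using hfv
    rw [← affineCombination_eq_linear_combination _ _ _ hw]
    exact affineCombination_mem_affineSpan hw p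

end AffineSpan

section Components

variable {E : Type*} [AddCommGroup E] [Module ℝ E] [TopologicalSpace E] [IsTopologicalAddGroup E]
  [ContinuousSMul ℝ E]

theorem mem_connectedComponentIn_diff_ker_iff {C : Set E} (hC : Convex ℝ C) (φ : E →L[ℝ] ℝ)
    {a b : E} (ha : a ∈ C) (hb : b ∈ C) (hφb : φ b ≠ 0) :
    a ∈ connectedComponentIn (C \ {v | φ v = 0}) b ↔ 0 < φ a * φ b := by
  constructor
  · intro hab
    by_contra! hneg
    have hpre := isPreconnected_connectedComponentIn (F := C \ {v | φ v = 0}) (x := b)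
    have hbb : b ∈ connectedComponentIn (C \ {v | φ v = 0}) b := mem_connectedComponentIn ⟨hb, hφb⟩
    obtain ⟨v, hv, hv0⟩ : (0 : ℝ) ∈ φ '' connectedComponentIn (C \ {v | φ v = 0}) b := by
      rcases mul_nonpos_iff.1 hneg with ⟨ha0, hb0⟩ | ⟨ha0, hb0⟩
      · exact hpre.intermediate_value hbb hab φ.continuous.continuousOn ⟨hb0, ha0⟩
      · exact hpre.intermediate_value hab hbb φ.continuous.continuousOn ⟨ha0, hb0⟩
    exact (connectedComponentIn_subset _ _ hv).2 hv0
  · intro hab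
    have hconv : Convex ℝ (C ∩ {v | 0 < φ v * φ b}) :=
      hC.inter (convex_halfSpace_gt (φ.toLinearMap.smulRight (φ b)).isLinear 0)
    refine hconv.isPreconnected.subset_connectedComponentIn ⟨hb, mul_self_pos.2 hφb⟩
      ?_ ⟨ha, hab⟩
    exact fun v hv => ⟨hv.1, left_ne_zero_of_mul hv.2.ne'⟩

end Components

noncomputable def signBit (t : ℝ) : ZMod 2 := if t < 0 then 1 else 0

theorem signBit_of_neg {t : ℝ} (h : t < 0) : signBit t = 1 := if_pos h

theorem signBit_of_nonneg {t : ℝ} (h : 0 ≤ t) : signBit t = 0 := if_neg h.not_gt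

theorem signBit_mul {a b : ℝ} (ha : a ≠ 0) (hb : b ≠ 0) :
    signBit (a * b) = signBit a + signBit b := by
  rcases ha.lt_or_gt with ha | ha <;> rcases hb.lt_or_gt with hb | hb
  · rw [signBit_of_nonneg (mul_pos_of_neg_of_neg ha hb).le, signBit_of_neg ha, signBit_of_neg hb]
    decide
  · rw [signBit_of_neg (mul_neg_of_neg_of_pos ha hb), signBit_of_neg ha,
      signBit_of_nonneg hb.le, add_zero]
  · rw [signBit_of_neg (mul_neg_of_pos_of_neg ha hb), signBit_of_nonneg ha.le,
      signBit_of_neg hb, zero_add]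
  · rw [signBit_of_nonneg (mul_pos ha hb).le, signBit_of_nonneg ha.le, signBit_of_nonneg hb.le,
      add_zero]

theorem signBit_inv (t : ℝ) : signBit t⁻¹ = signBit t := by
  simp only [signBit, inv_lt_zero]

theorem signBit_add_add {a b c : ℝ} (ha : a ≠ 0) (hb : b ≠ 0) (hc : c ≠ 0) :
    signBit a + signBit b + signBit c = signBit (a * b * c) := by
  rw [signBit_mul (mul_ne_zero ha hb) hc, signBit_mul ha hb]

theorem signBit_mul_add_add {a b c : ℝ} (ha : a ≠ 0) (hb : b ≠ 0) (hc : c ≠ 0) :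
    signBit (a * b) + signBit (b * c) + signBit (a * c) = 0 := by
  rw [signBit_add_add (mul_ne_zero ha hb) (mul_ne_zero hb hc) (mul_ne_zero ha hc),
    signBit_of_nonneg (by nlinarith [sq_nonneg (a * b * c)])]

namespace Finset

variable {α β M : Type*}

theorem sum_powersetCard_succ_insert [DecidableEq α] [AddCommMonoid M] {a : α} {s : Finset α}
    (ha : a ∉ s) (k : ℕ) (g : Finset α → M) :
    ∑ S ∈ (insert a s).powersetCard (k + 1), g S =
      ∑ S ∈ s.powersetCard (k + 1), g S + ∑ T ∈ s.powersetCard k, g (insert a T) := by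
  have hnot : ∀ T ∈ s.powersetCard k, a ∉ T := fun T hT h => ha ((mem_powersetCard.1 hT).1 h)
  rw [powersetCard_succ_insert ha, sum_union, sum_image]
  · intro T hT T' hT' h
    rw [← erase_insert (hnot T hT), h, erase_insert (hnot T' hT')]
  · refine disjoint_left.2 fun S hS hS' => ?_
    obtain ⟨T, -, rfl⟩ := mem_image.1 hS'
    exact ha ((mem_powersetCard.1 hS).1 (mem_insert_self a T))

theorem powersetCard_image_of_injOn [DecidableEq β] {c : α → β} {s : Finset α}
    (hc : Set.InjOn c s) (k : ℕ) :
    (s.image c).powersetCard k = (s.powersetCard k).image (image c) := by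
  ext T
  simp only [mem_powersetCard, mem_image]
  constructor
  · rintro ⟨hT, rfl⟩
    obtain ⟨S, hS, rfl⟩ := subset_image_iff.1 hT
    exact ⟨S, ⟨hS, (card_image_of_injOn (hc.mono hS)).symm⟩, rfl⟩
  · rintro ⟨S, ⟨hS, rfl⟩, rfl⟩
    exact ⟨image_subset_image hS, card_image_of_injOn (hc.mono hS)⟩

theorem card_filter_powersetCard_image [DecidableEq β] {c : α → β} {s : Finset α}
    (hc : Set.InjOn c s) (k : ℕ) (p : Finset β → Prop) [DecidablePred p] :
    #{T ∈ (s.image c).powersetCard k | p T} = #{S ∈ s.powersetCard k | p (S.image c)} := by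
  rw [powersetCard_image_of_injOn hc, filter_image, card_image_of_injOn]
  refine (image_injOn_powerset_of_injOn hc).mono fun S hS => ?_
  exact mem_powerset.2 (mem_powersetCard.1 (mem_filter.1 hS).1).1

end Finset

section Projective

variable {d : ℕ}

theorem ProjSp.one_le_of_ne {x y : ProjSp d} (hxy : x ≠ y) : 1 ≤ d := by
  refine Nat.one_le_iff_ne_zero.2 fun hd => hxy ?_
  subst hd
  rw [← x.mk_rep, ← y.mk_rep, Projectivization.mk_eq_mk_iff']
  exact (finrank_eq_one_iff_of_nonzero' _ y.rep_nonzero).1 (by simp) x.rep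

theorem apply_chart (f ψ : Dual ℝ (Fin (d + 1) → ℝ)) (x : ProjSp d) :
    ψ (chart f x) = (f x.rep)⁻¹ * ψ x.rep := by
  rw [chart, map_smul, smul_eq_mul]

theorem apply_chart_self {f : Dual ℝ (Fin (d + 1) → ℝ)} {x : ProjSp d} (hx : f x.rep ≠ 0) :
    f (chart f x) = 1 := by
  rw [apply_chart, inv_mul_cancel₀ hx]

theorem chart_injOn {f : Dual ℝ (Fin (d + 1) → ℝ)} {Q : Finset (ProjSp d)}
    (hfQ : ∀ q ∈ Q, f q.rep ≠ 0) : Set.InjOn (chart f) Q := by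
  intro x hx y _ h
  rw [← x.mk_rep, ← y.mk_rep, Projectivization.mk_eq_mk_iff']
  refine ⟨f x.rep * (f y.rep)⁻¹, ?_⟩
  rw [mul_smul, ← chart, ← h, chart, smul_smul, mul_inv_cancel₀ (hfQ x hx), one_smul]

theorem span_chart_image {f : Dual ℝ (Fin (d + 1) → ℝ)} {S : Set (ProjSp d)}
    (hfS : ∀ s ∈ S, f s.rep ≠ 0) :
    span ℝ (chart f '' S) = span ℝ (Projectivization.rep '' S) := by
  refine le_antisymm (span_le.2 ?_) (span_le.2 ?_) <;> rintro _ ⟨s, hs, rfl⟩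
  · exact smul_mem _ _ (subset_span ⟨s, hs, rfl⟩)
  · rw [← one_smul ℝ s.rep, ← mul_inv_cancel₀ (hfS s hs), mul_smul]
    exact smul_mem _ _ (subset_span ⟨s, hs, rfl⟩)

namespace GenericProj

variable {Q S : Finset (ProjSp d)}

theorem finrank_span (hgen : GenericProj Q) (hSQ : S ⊆ Q) (hS : S.card ≤ d + 1) :
    finrank ℝ (span ℝ (Projectivization.rep '' (S : Set (ProjSp d)))) = S.card := by
  rw [Set.image_eq_range]
  exact (finrank_span_eq_card (hgen S hSQ hS)).trans (Fintype.card_coe S)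

theorem rep_notMem_span (hgen : GenericProj Q) (hSQ : S ⊆ Q) (hS : S.card ≤ d) {x : ProjSp d}
    (hx : x ∈ Q) (hxS : x ∉ S) :
    x.rep ∉ span ℝ (Projectivization.rep '' (S : Set (ProjSp d))) := by
  have h : LinearIndepOn ℝ Projectivization.rep (↑(insert x S) : Set (ProjSp d)) :=
    hgen _ (insert_subset hx hSQ) (by rw [card_insert_of_notMem hxS]; omega)
  rw [coe_insert, linearIndepOn_insert (by simpa using hxS)] at h
  exact h.2

theorem ker_eq_span (hgen : GenericProj Q) (hSQ : S ⊆ Q) (hS : S.card = d)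
    {φ : Dual ℝ (Fin (d + 1) → ℝ)} (hφ : φ ≠ 0) (hφS : ∀ s ∈ S, φ s.rep = 0) :
    LinearMap.ker φ = span ℝ (Projectivization.rep '' (S : Set (ProjSp d))) := by
  refine (eq_of_le_of_finrank_le (span_le.2 ?_) ?_).symm
  · rintro _ ⟨s, hs, rfl⟩
    exact hφS s hs
  · have := Dual.finrank_ker_add_one_of_ne_zero hφ
    rw [finrank_fin_fun] at this
    rw [hgen.finrank_span hSQ (by omega)]
    omega

theorem apply_rep_ne_zero (hgen : GenericProj Q) (hSQ : S ⊆ Q) (hS : S.card = d)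
    {φ : Dual ℝ (Fin (d + 1) → ℝ)} (hφ : φ ≠ 0) (hφS : ∀ s ∈ S, φ s.rep = 0) {x : ProjSp d}
    (hx : x ∈ Q) (hxS : x ∉ S) : φ x.rep ≠ 0 := fun h =>
  hgen.rep_notMem_span hSQ hS.le hx hxS (hgen.ker_eq_span hSQ hS hφ hφS ▸ h)

theorem span_eq_top (hgen : GenericProj Q) (hSQ : S ⊆ Q) (hS : S.card = d + 1) :
    span ℝ (Projectivization.rep '' (S : Set (ProjSp d))) = ⊤ :=
  eq_top_of_finrank_eq (by rw [hgen.finrank_span hSQ hS.le, hS, finrank_fin_fun])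

theorem exists_apply_rep_eq (hgen : GenericProj Q) {T : Finset (ProjSp d)} (hTQ : T ⊆ Q)
    (hT : T.card + 1 = d) {y z : ProjSp d} (hy : y ∈ Q) (hz : z ∈ Q) (hyT : y ∉ T) (hzT : z ∉ T)
    (hyz : y ≠ z) (x : ProjSp d) :
    ∃ b c : ℝ, ∀ φ : Dual ℝ (Fin (d + 1) → ℝ), (∀ s ∈ T, φ s.rep = 0) →
      φ x.rep = b * φ y.rep + c * φ z.rep := by
  have hmem :
      x.rep ∈ span ℝ (Projectivization.rep '' (↑(insert y (insert z T)) : Set (ProjSp d))) := by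
    rw [hgen.span_eq_top (insert_subset hy (insert_subset hz hTQ))
      (by rw [card_insert_of_notMem (by simp [hyz, hyT]), card_insert_of_notMem hzT, hT])]
    trivial
  rw [coe_insert, coe_insert, Set.image_insert_eq, Set.image_insert_eq] at hmem
  obtain ⟨b, u, hu, hbu⟩ := mem_span_insert.1 hmem
  obtain ⟨c, w, hw, rfl⟩ := mem_span_insert.1 hu
  refine ⟨b, c, fun φ hφT => ?_⟩
  have hw0 : φ w = 0 := by
    refine (span_le (p := LinearMap.ker φ).2 ?_) hw
    rintro _ ⟨s, hs, rfl⟩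
    exact hφT s hs
  rw [hbu, map_add, map_add, map_smul, map_smul, hw0, add_zero, smul_eq_mul, smul_eq_mul]

end GenericProj

/-- For `d` points of a generic configuration, the kernel of this form is the hyperplane they
span; the value is junk when `d < #S`. -/
noncomputable def hyperplaneForm (S : Finset (ProjSp d)) : Dual ℝ (Fin (d + 1) → ℝ) :=
  Classical.epsilon fun φ => φ ≠ 0 ∧ ∀ s ∈ S, φ s.rep = 0

theorem hyperplaneForm_spec {S : Finset (ProjSp d)} (hS : S.card ≤ d) :
    hyperplaneForm S ≠ 0 ∧ ∀ s ∈ S, hyperplaneForm S s.rep = 0 := by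
  have hlt : span ℝ (Projectivization.rep '' (S : Set (ProjSp d))) < ⊤ := by
    refine lt_top_iff_ne_top.2 fun h => ?_
    have := (finrank_span_finset_le_card (R := ℝ) (S.image Projectivization.rep)).trans
      card_image_le
    rw [Set.finrank, coe_image, h, finrank_top, finrank_fin_fun] at this
    omega
  obtain ⟨φ, hφ, hle⟩ := exists_le_ker_of_lt_top _ hlt
  exact Classical.epsilon_spec
    (p := fun φ : Dual ℝ (Fin (d + 1) → ℝ) => φ ≠ 0 ∧ ∀ s ∈ S, φ s.rep = 0)
    ⟨φ, hφ, fun s hs => hle (subset_span ⟨s, hs, rfl⟩)⟩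

variable {Q : Finset (ProjSp d)}

theorem separatesIn_chart_iff (hgen : GenericProj Q) {S : Finset (ProjSp d)} (hSQ : S ⊆ Q)
    (hS : S.card = d) {f φ : Dual ℝ (Fin (d + 1) → ℝ)} (hfQ : ∀ q ∈ Q, f q.rep ≠ 0)
    (hφ : φ ≠ 0) (hφS : ∀ s ∈ S, φ s.rep = 0) {x y : ProjSp d} (hx : x ∈ Q) (hxS : x ∉ S)
    (hy : y ∈ Q) (hyS : y ∉ S) :
    SeparatesIn {v | f v = 1} (affineSpan ℝ (S.image (chart f) : Set (Fin (d + 1) → ℝ)))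
      (chart f x) (chart f y) ↔ φ (chart f x) * φ (chart f y) < 0 := by
  have hspan : (affineSpan ℝ (S.image (chart f) : Set (Fin (d + 1) → ℝ)) : Set _) =
      {v | φ v = 0} ∩ {v | f v = 1} := by
    rw [coe_image, Set.image_eq_range,
      coe_affineSpan_range_eq_span_inter f fun s => apply_chart_self (hfQ _ (hSQ s.2)),
      ← Set.image_eq_range, span_chart_image fun s hs => hfQ s (hSQ hs),
      ← hgen.ker_eq_span hSQ hS hφ hφS]
    rfl
  have hmem : ∀ v ∈ Q, v ∉ S → chart f v ∈ {v | f v = 1} \ {v | φ v = 0} := fun v hv hvS =>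
    ⟨apply_chart_self (hfQ v hv), by
      rw [Set.mem_ofPred, apply_chart]
      exact mul_ne_zero (inv_ne_zero (hfQ v hv)) (hgen.apply_rep_ne_zero hSQ hS hφ hφS hv hvS)⟩
  have hcomp := mem_connectedComponentIn_diff_ker_iff (convex_hyperplane f.isLinear 1)
    (LinearMap.toContinuousLinearMap φ) (hmem x hx hxS).1 (hmem y hy hyS).1 (hmem y hy hyS).2
  simp only [LinearMap.coe_toContinuousLinearMap'] at hcomp
  rw [SeparatesIn, hspan, Set.sdiff_inter_self_eq_sdiff, hcomp, not_lt]
  exact ⟨fun h => h.2.2.lt_of_ne (mul_ne_zero (hmem x hx hxS).2 (hmem y hy hyS).2),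
    fun h => ⟨hmem x hx hxS, hmem y hy hyS, h.le⟩⟩

theorem sepCountIn_chart {f : Dual ℝ (Fin (d + 1) → ℝ)} (hfQ : ∀ q ∈ Q, f q.rep ≠ 0)
    {x y : ProjSp d} (hx : x ∈ Q) (hy : y ∈ Q) :
    sepCountIn {v | f v = 1} (Q.image (chart f)) (chart f x) (chart f y) =
      #{S ∈ (Q \ {x, y}).powersetCard d | SeparatesIn {v | f v = 1}
        (affineSpan ℝ (S.image (chart f) : Set (Fin (d + 1) → ℝ))) (chart f x) (chart f y)} := by
  have hpair : ({x, y} : Finset (ProjSp d)).image (chart f) = {chart f x, chart f y} := by simp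
  -- `sepCountIn` filters the `d`-subsets after coercing them to `Set`s.
  rw [sepCountIn, bind_pure_comp, fmap_def, filter_image]
  refine (card_image_of_injective _ coe_injective).trans ?_
  rw [← hpair, ← image_sdiff_of_injOn (chart_injOn hfQ)
      (insert_subset hx (singleton_subset_iff.2 hy)),
    card_filter_powersetCard_image ((chart_injOn hfQ).mono (coe_subset.2 sdiff_subset))]

theorem card_sdiff_pair {x y : ProjSp d} (hx : x ∈ Q) (hy : y ∈ Q) (hxy : x ≠ y) :
    #(Q \ {x, y}) = #Q - 2 := by
  rw [card_sdiff_of_subset (insert_subset hx (singleton_subset_iff.2 hy)), card_pair hxy]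

noncomputable def orchardParity (Q : Finset (ProjSp d)) (x y : ProjSp d) : ZMod 2 :=
  ∑ S ∈ (Q \ {x, y}).powersetCard d, signBit (hyperplaneForm S x.rep * hyperplaneForm S y.rep)

def OrchardRel (Q : Finset (ProjSp d)) (x y : ProjSp d) : Prop :=
  x = y ∨ orchardParity Q x y = ((Q.card - 3).choose (d - 1) : ℕ)

theorem sepCountIn_chart_cast (hgen : GenericProj Q) {f : Dual ℝ (Fin (d + 1) → ℝ)}
    (hfQ : ∀ q ∈ Q, f q.rep ≠ 0) {x y : ProjSp d} (hx : x ∈ Q) (hy : y ∈ Q) (hxy : x ≠ y) :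
    (sepCountIn {v | f v = 1} (Q.image (chart f)) (chart f x) (chart f y) : ZMod 2) =
      orchardParity Q x y + ((#Q - 2).choose d : ℕ) * signBit (f x.rep * f y.rep) := by
  rw [sepCountIn_chart hfQ hx hy, natCast_card_filter, orchardParity,
    ← card_sdiff_pair hx hy hxy, ← card_powersetCard, ← nsmul_eq_mul, ← sum_const,
    ← sum_add_distrib]
  refine sum_congr rfl fun S hS => ?_
  obtain ⟨hSsub, hS⟩ := mem_powersetCard.1 hS
  have hSQ : S ⊆ Q := hSsub.trans sdiff_subset
  have hxS : x ∉ S := fun h => (mem_sdiff.1 (hSsub h)).2 (by simp)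
  have hyS : y ∉ S := fun h => (mem_sdiff.1 (hSsub h)).2 (by simp)
  obtain ⟨hφ, hφS⟩ := hyperplaneForm_spec hS.le
  rw [if_congr (separatesIn_chart_iff hgen hSQ hS hfQ hφ hφS hx hxS hy hyS) rfl rfl]
  change signBit _ = _
  rw [apply_chart, apply_chart, show ∀ a b p q : ℝ, a⁻¹ * p * (b⁻¹ * q) = p * q * (a * b)⁻¹ from
      fun a b p q => by rw [mul_inv]; ring,
    signBit_mul (mul_ne_zero (hgen.apply_rep_ne_zero hSQ hS hφ hφS hx hxS)
      (hgen.apply_rep_ne_zero hSQ hS hφ hφS hy hyS))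
      (inv_ne_zero (mul_ne_zero (hfQ x hx) (hfQ y hy))), signBit_inv]

theorem chartRel_iff (hgen : GenericProj Q) (heven : Even ((#Q - 2).choose d))
    {f : Dual ℝ (Fin (d + 1) → ℝ)} (hfQ : ∀ q ∈ Q, f q.rep ≠ 0) {x y : ProjSp d} (hx : x ∈ Q)
    (hy : y ∈ Q) : ChartRel f Q x y ↔ OrchardRel Q x y := by
  by_cases hxy : x = y
  · simp [ChartRel, OrchardRel, hxy]
  rw [ChartRel, OrchardRel, ← ZMod.natCast_eq_natCast_iff',
    sepCountIn_chart_cast hgen hfQ hx hy hxy, ZMod.natCast_eq_zero_iff_even.2 heven, zero_mul,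
    add_zero]

theorem hyperplaneForm_insert_triangle (hgen : GenericProj Q) {T : Finset (ProjSp d)}
    (hTQ : T ⊆ Q) (hT : T.card + 1 = d) {x y z : ProjSp d} (hx : x ∈ Q) (hy : y ∈ Q) (hz : z ∈ Q)
    (hxT : x ∉ T) (hyT : y ∉ T) (hzT : z ∉ T) (hxy : x ≠ y) (hyz : y ≠ z) (hxz : x ≠ z) :
    signBit (hyperplaneForm (insert z T) x.rep * hyperplaneForm (insert z T) y.rep) +
      signBit (hyperplaneForm (insert x T) y.rep * hyperplaneForm (insert x T) z.rep) +
      signBit (hyperplaneForm (insert y T) x.rep * hyperplaneForm (insert y T) z.rep) = 1 := by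
  have hcard : ∀ a ∉ T, (insert a T).card = d := fun a ha => by rw [card_insert_of_notMem ha, hT]
  have hspec := fun a (ha : a ∉ T) => hyperplaneForm_spec (hcard a ha).le
  have hne : ∀ a ∈ Q, a ∉ T → ∀ v ∈ Q, v ∉ T → v ≠ a → hyperplaneForm (insert a T) v.rep ≠ 0 :=
    fun a ha haT v hv hvT hva => hgen.apply_rep_ne_zero (insert_subset ha hTQ) (hcard a haT)
      (hspec a haT).1 (hspec a haT).2 hv (by simp [hva, hvT])
  obtain ⟨b, c, hdecomp⟩ := hgen.exists_apply_rep_eq hTQ hT hy hz hyT hzT hyz x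
  have hdecomp' := fun a (ha : a ∉ T) =>
    hdecomp (hyperplaneForm (insert a T)) fun s hs => (hspec a ha).2 s (mem_insert_of_mem hs)
  set φ₁ := hyperplaneForm (insert z T)
  set φ₂ := hyperplaneForm (insert x T)
  set φ₃ := hyperplaneForm (insert y T)
  have h₁ : φ₁ x.rep = b * φ₁ y.rep := by
    simpa [φ₁, (hspec z hzT).2 z (mem_insert_self z T)] using hdecomp' z hzT
  have h₂ : 0 = b * φ₂ y.rep + c * φ₂ z.rep := by
    simpa [φ₂, (hspec x hxT).2 x (mem_insert_self x T)] using hdecomp' x hxT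
  have h₃ : φ₃ x.rep = c * φ₃ z.rep := by
    simpa [φ₃, (hspec y hyT).2 y (mem_insert_self y T)] using hdecomp' y hyT
  have hφ₁x := hne z hz hzT x hx hxT hxz
  have hφ₁y := hne z hz hzT y hy hyT hyz
  have hφ₂y := hne x hx hxT y hy hyT hxy.symm
  have hφ₂z := hne x hx hxT z hz hzT hxz.symm
  have hφ₃x := hne y hy hyT x hx hxT hxy
  have hφ₃z := hne y hy hyT z hz hzT hyz.symm
  have hc : c ≠ 0 := by rintro rfl; exact hφ₃x (by rw [h₃, zero_mul])
  rw [signBit_add_add (mul_ne_zero hφ₁x hφ₁y) (mul_ne_zero hφ₂y hφ₂z) (mul_ne_zero hφ₃x hφ₃z)]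
  refine signBit_of_neg ?_
  calc φ₁ x.rep * φ₁ y.rep * (φ₂ y.rep * φ₂ z.rep) * (φ₃ x.rep * φ₃ z.rep)
      = -(c * φ₁ y.rep * φ₂ z.rep * φ₃ z.rep) ^ 2 := by
        rw [h₁, h₃]
        linear_combination (-(c * φ₁ y.rep ^ 2 * φ₃ z.rep ^ 2 * φ₂ z.rep)) * h₂
    _ < 0 := neg_neg_of_pos (by positivity)

theorem orchardParity_comm (x y : ProjSp d) : orchardParity Q x y = orchardParity Q y x := by
  simp only [orchardParity, pair_comm x y, mul_comm]

theorem orchardParity_add_add (hgen : GenericProj Q) {x y z : ProjSp d} (hx : x ∈ Q) (hy : y ∈ Q)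
    (hz : z ∈ Q) (hxy : x ≠ y) (hyz : y ≠ z) (hxz : x ≠ z) :
    orchardParity Q x y + orchardParity Q y z + orchardParity Q x z =
      ((#Q - 3).choose (d - 1) : ℕ) := by
  obtain ⟨k, rfl⟩ : ∃ k, d = k + 1 := ⟨d - 1, (Nat.sub_add_cancel (ProjSp.one_le_of_ne hxy)).symm⟩
  set R := Q \ {x, y, z}
  have hxR : x ∉ R := by simp [R]
  have hyR : y ∉ R := by simp [R]
  have hzR : z ∉ R := by simp [R]
  have hRQ : R ⊆ Q := sdiff_subset
  have hQxy : Q \ {x, y} = insert z R := by ext; grind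
  have hQyz : Q \ {y, z} = insert x R := by ext; grind
  have hQxz : Q \ {x, z} = insert y R := by ext; grind
  have hRcard : #R = #Q - 3 := by
    have := card_sdiff_pair hx hy hxy
    rw [hQxy, card_insert_of_notMem hzR] at this
    omega
  simp only [orchardParity, hQxy, hQyz, hQxz, sum_powersetCard_succ_insert hzR,
    sum_powersetCard_succ_insert hxR, sum_powersetCard_succ_insert hyR]
  rw [show ∀ a₁ b₁ a₂ b₂ a₃ b₃ : ZMod 2, a₁ + b₁ + (a₂ + b₂) + (a₃ + b₃) =
      (a₁ + a₂ + a₃) + (b₁ + b₂ + b₃) from fun _ _ _ _ _ _ => by abel,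
    ← sum_add_distrib, ← sum_add_distrib, ← sum_add_distrib, ← sum_add_distrib]
  rw [sum_eq_zero, sum_eq_card_nsmul (b := 1), zero_add,
    card_powersetCard, hRcard, nsmul_one, Nat.add_sub_cancel]
  · intro T hT
    obtain ⟨hTR, hT⟩ := mem_powersetCard.1 hT
    exact hyperplaneForm_insert_triangle hgen (hTR.trans hRQ) (by omega) hx hy hz
      (fun h => hxR (hTR h)) (fun h => hyR (hTR h)) (fun h => hzR (hTR h)) hxy hyz hxz
  · intro S hS
    obtain ⟨hSR, hS⟩ := mem_powersetCard.1 hS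
    obtain ⟨hφ, hφS⟩ := hyperplaneForm_spec hS.le
    have hne := fun v (hv : v ∈ Q) (hvR : v ∉ R) =>
      hgen.apply_rep_ne_zero (hSR.trans hRQ) hS hφ hφS hv (fun h => hvR (hSR h))
    exact signBit_mul_add_add (hne x hx hxR) (hne y hy hyR) (hne z hz hzR)

theorem OrchardRel.symm {x y : ProjSp d} (h : OrchardRel Q x y) : OrchardRel Q y x := by
  rw [OrchardRel, orchardParity_comm, eq_comm (a := y)]
  exact h

theorem OrchardRel.trans (hgen : GenericProj Q) {x y z : ProjSp d} (hx : x ∈ Q) (hy : y ∈ Q)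
    (hz : z ∈ Q) (hxy : OrchardRel Q x y) (hyz : OrchardRel Q y z) : OrchardRel Q x z := by
  by_cases hxz : x = z
  · exact Or.inl hxz
  by_cases hxy' : x = y
  · rwa [hxy']
  by_cases hyz' : y = z
  · rwa [← hyz']
  have key : ∀ a b c k : ZMod 2, a + b + c = k → a = k → b = k → c = k := by decide
  exact Or.inr (key _ _ _ _ (orchardParity_add_add hgen hx hy hz hxy' hyz' hxz)
    (hxy.resolve_left hxy') (hyz.resolve_left hyz'))

theorem orchardRel_or (hgen : GenericProj Q) {x y z : ProjSp d} (hx : x ∈ Q) (hy : y ∈ Q)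
    (hz : z ∈ Q) : OrchardRel Q x y ∨ OrchardRel Q y z ∨ OrchardRel Q x z := by
  by_cases hxy : x = y
  · exact Or.inl (Or.inl hxy)
  by_cases hyz : y = z
  · exact Or.inr (Or.inl (Or.inl hyz))
  by_cases hxz : x = z
  · exact Or.inr (Or.inr (Or.inl hxz))
  have key : ∀ a b c k : ZMod 2, a + b + c = k → a = k ∨ b = k ∨ c = k := by decide
  rcases key _ _ _ _ (orchardParity_add_add hgen hx hy hz hxy hyz hxz) with h | h | h
  exacts [Or.inl (Or.inr h), Or.inr (Or.inl (Or.inr h)), Or.inr (Or.inr (Or.inr h))]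

end Projective

theorem projective_orchard_general {d n : ℕ} (Q : Finset (ProjSp d)) (hn : Q.card = n)
    (hgen : GenericProj Q) (heven : Even (Nat.choose (n - 2) d))
    (f g : (Fin (d + 1) → ℝ) →ₗ[ℝ] ℝ)
    (hfQ : ∀ x ∈ Q, f (Projectivization.rep x) ≠ 0)
    (hgQ : ∀ x ∈ Q, g (Projectivization.rep x) ≠ 0) :
    (∀ x ∈ Q, ∀ y ∈ Q, (ChartRel f Q x y ↔ ChartRel g Q x y)) ∧
    (∀ x ∈ Q, ChartRel f Q x x) ∧
    (∀ x ∈ Q, ∀ y ∈ Q, ChartRel f Q x y → ChartRel f Q y x) ∧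
    (∀ x ∈ Q, ∀ y ∈ Q, ∀ z ∈ Q, ChartRel f Q x y → ChartRel f Q y z → ChartRel f Q x z) ∧
    (∀ x ∈ Q, ∀ y ∈ Q, ∀ z ∈ Q, ChartRel f Q x y ∨ ChartRel f Q y z ∨ ChartRel f Q x z) := by
  subst hn
  have hf : ∀ x ∈ Q, ∀ y ∈ Q, ChartRel f Q x y ↔ OrchardRel Q x y :=
    fun x hx y hy => chartRel_iff hgen heven hfQ hx hy
  refine ⟨fun x hx y hy => (hf x hx y hy).trans (chartRel_iff hgen heven hgQ hx hy).symm,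
    fun x _ => Or.inl rfl, fun x hx y hy h => ?_, fun x hx y hy z hz hxy hyz => ?_,
    fun x hx y hy z hz => ?_⟩
  · exact (hf y hy x hx).2 ((hf x hx y hy).1 h).symm
  · exact (hf x hx z hz).2 (((hf x hx y hy).1 hxy).trans hgen hx hy hz ((hf y hy z hz).1 hyz))
  · rw [hf x hx y hy, hf y hy z hz, hf x hx z hz]
    exact orchardRel_or hgen hx hy hz

/-- Theorem 4.1A, Projective Orchard Theorem: for a generic configuration
`Q` of `n` points in `RP^d` with `binom (n-2) d` even, the Orchard partition computed in an
affine chart `RP^d \ H ≅ ℝ^d` (for any hyperplane `H` disjoint from `Q`) does not depend on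
the chart; hence `Q` carries a natural partition into at most two classes: an equivalence
relation with at most two equivalence classes. -/
theorem projective_orchard {d n : ℕ} (Q : Finset (ProjSp d)) (hn : Q.card = n)
    (hgen : GenericProj Q) (heven : Even (Nat.choose (n - 2) d))
    (f g : (Fin (d + 1) → ℝ) →ₗ[ℝ] ℝ) (hf : f ≠ 0) (hg : g ≠ 0)
    (hfQ : ∀ x ∈ Q, f (Projectivization.rep x) ≠ 0)
    (hgQ : ∀ x ∈ Q, g (Projectivization.rep x) ≠ 0) :
    (∀ x ∈ Q, ∀ y ∈ Q, (ChartRel f Q x y ↔ ChartRel g Q x y)) ∧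
    (∀ x ∈ Q, ChartRel f Q x x) ∧
    (∀ x ∈ Q, ∀ y ∈ Q, ChartRel f Q x y → ChartRel f Q y x) ∧
    (∀ x ∈ Q, ∀ y ∈ Q, ∀ z ∈ Q, ChartRel f Q x y → ChartRel f Q y z → ChartRel f Q x z) ∧
    (∀ x ∈ Q, ∀ y ∈ Q, ∀ z ∈ Q, ChartRel f Q x y ∨ ChartRel f Q y z ∨ ChartRel f Q x z) :=
  projective_orchard_general Q hn hgen heven f g hfQ hgQ
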